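/- arXiv:1610.00843 — 4 statements merged into one kernel-verified Lean document; each statement's English description precedes it below -/
import Mathlib

section
/- Let M be a symmetric d×d matrix of rank k−1 and let E be its column span. Then for any w ∈ ℝ^d, ‖w‖ · dist(w, E) ≥ σ_k(M + w w^T), where σ_k denotes the k-th largest singular value. -/
/-!
Let `Z = M + w wᵀ` and `s = σ_k(Z)`; we may assume `s > 0`, so `k ≤ d`. The eigenvectors of `Z`
whose eigenvalues have modulus at least `s` span a subspace `T` of dimension at least `k`, and on
`T` we have `s ‖x‖ ≤ ‖Z x‖`. Since `dim E = k - 1`, some `x ≠ 0` lies in `T ∩ Eᗮ`. As `M` is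
symmetric, `Eᗮ = ker M`, so `Z x = ⟪w, x⟫ w`, and `⟪w, x⟫ = ⟪w - y, x⟫` for every `y ∈ E` gives
`s ‖x‖ ≤ ‖Z x‖ ≤ dist(w, E) ‖x‖ ‖w‖`.
-/

open Matrix

/-- The `k`-th largest singular value of a symmetric real matrix: the `k`-th element
(1-indexed) of the absolute values of its eigenvalues sorted in decreasing order. -/
noncomputable def kthSingular {d : ℕ} (A : Matrix (Fin d) (Fin d) ℝ)
    (hA : A.IsHermitian) (k : ℕ) : ℝ :=
  ((List.ofFn fun i => |hA.eigenvalues i|).insertionSort (· ≥ ·)).getD (k - 1) 0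

theorem List.SortedGE.succ_le_countP_getElem_le {α : Type*} [LinearOrder α] {l : List α}
    (hl : l.SortedGE) (i : ℕ) (hi : i < l.length) : i + 1 ≤ l.countP (l[i] ≤ ·) := by
  have htake : (l.take (i + 1)).countP (l[i] ≤ ·) = i + 1 := by
    rw [List.countP_eq_length.2, List.length_take_of_le hi]
    intro x hx
    obtain ⟨j, hj, rfl⟩ := List.mem_take_iff_getElem.1 hx
    simpa using (List.sortedGE_iff_getElem_ge_getElem_of_le.1 hl) (by omega : j ≤ i)
  exact htake ▸ (List.take_sublist _ _).countP_le

theorem List.countP_ofFn_eq_card_filter {α : Type*} {d : ℕ} (g : Fin d → α) (p : α → Prop)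
    [DecidablePred p] :
    (List.ofFn g).countP (p ·) = (Finset.univ.filter fun i => p (g i)).card := by
  rw [← Multiset.coe_countP, ← Fin.univ_val_map, Multiset.countP_map, Finset.card_def,
    Finset.filter_val]

section kthSingular

variable {d : ℕ} {A : Matrix (Fin d) (Fin d) ℝ} (hA : A.IsHermitian) {k : ℕ}

theorem kthSingular_eq_zero_of_lt (h : d < k) : kthSingular A hA k = 0 :=
  List.getD_eq_default _ _ (by simp only [List.length_insertionSort, List.length_ofFn]; omega)

theorem le_card_filter_kthSingular_le_abs_eigenvalues (hk : 0 < k) (hkd : k ≤ d) :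
    k ≤ (Finset.univ.filter fun i => kthSingular A hA k ≤ |hA.eigenvalues i|).card := by
  set l := (List.ofFn fun i => |hA.eigenvalues i|).insertionSort (· ≥ ·)
  have hkl : k - 1 < l.length := by
    simp only [l, List.length_insertionSort, List.length_ofFn]; omega
  have hs : kthSingular A hA k = l[k - 1] := List.getD_eq_getElem _ _ hkl
  rw [hs, ← List.countP_ofFn_eq_card_filter, ← (List.perm_insertionSort (· ≥ ·) _).countP_eq]
  simpa [Nat.sub_add_cancel hk] using List.sortedGE_insertionSort.succ_le_countP_getElem_le _ hkl

end kthSingular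

section InnerProductSpace

variable {𝕜 E ι : Type*} [RCLike 𝕜] [NormedAddCommGroup E] [InnerProductSpace 𝕜 E] [Fintype ι]

theorem OrthonormalBasis.finrank_span_image (b : OrthonormalBasis ι 𝕜 E) (I : Finset ι) :
    Module.finrank 𝕜 (Submodule.span 𝕜 (b '' I)) = I.card := by
  have hli : LinearIndependent 𝕜 fun i : (I : Set ι) => b i :=
    b.orthonormal.linearIndependent.comp _ Subtype.val_injective
  rw [Set.image_eq_range, finrank_span_eq_card hli]
  simp only [Finset.coe_sort_coe, Fintype.card_coe]

theorem OrthonormalBasis.repr_eq_zero_of_mem_span_image (b : OrthonormalBasis ι 𝕜 E) {I : Set ι}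
    {x : E} (hx : x ∈ Submodule.span 𝕜 (b '' I)) {j : ι} (hj : j ∉ I) : b.repr x j = 0 := by
  rw [b.repr_apply_apply, ← Submodule.mem_orthogonal_singleton_iff_inner_right]
  refine Submodule.span_le.2 ?_ hx
  rintro _ ⟨i, hi, rfl⟩
  exact Submodule.mem_orthogonal_singleton_iff_inner_right.2
    (b.orthonormal.inner_eq_zero fun h => hj (h ▸ hi))

theorem OrthonormalBasis.mul_norm_le_norm_apply_of_mem_span (b : OrthonormalBasis ι 𝕜 E)
    (T : E →ₗ[𝕜] E) (μ : ι → 𝕜) (hT : ∀ i, T (b i) = μ i • b i) {s : ℝ} (hs : 0 ≤ s) (I : Set ι)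
    (hI : ∀ i ∈ I, s ≤ ‖μ i‖) {x : E} (hx : x ∈ Submodule.span 𝕜 (b '' I)) :
    s * ‖x‖ ≤ ‖T x‖ := by
  have hTx : T x = b.repr.symm (WithLp.toLp 2 fun i => μ i * b.repr x i) := by
    conv_lhs => rw [← b.sum_repr x]
    simp [← b.sum_repr_symm, hT, smul_smul, mul_comm]
  have hsq : (s * ‖x‖) ^ 2 ≤ ‖T x‖ ^ 2 := by
    rw [hTx, LinearIsometryEquiv.norm_map, ← b.repr.norm_map x, mul_pow,
      EuclideanSpace.norm_sq_eq, EuclideanSpace.norm_sq_eq, Finset.mul_sum]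
    refine Finset.sum_le_sum fun i _ => ?_
    by_cases hi : i ∈ I
    · simp only [norm_mul, mul_pow]
      gcongr
      exact hI i hi
    · simp [b.repr_eq_zero_of_mem_span_image hx hi]
  exact le_of_pow_le_pow_left₀ two_ne_zero (norm_nonneg _) hsq

theorem Submodule.norm_inner_le_infDist_mul_norm (K : Submodule 𝕜 E) (w : E) {x : E}
    (hx : x ∈ Kᗮ) : ‖inner 𝕜 w x‖ ≤ Metric.infDist w K * ‖x‖ := by
  rcases eq_or_ne x 0 with rfl | hx0
  · simp
  rw [← div_le_iff₀ (norm_pos_iff.2 hx0), Metric.le_infDist ⟨0, K.zero_mem⟩]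
  intro y hy
  rw [div_le_iff₀ (norm_pos_iff.2 hx0), dist_eq_norm]
  calc ‖inner 𝕜 w x‖ = ‖inner 𝕜 (w - y) x‖ := by
        rw [inner_sub_left, Submodule.inner_right_of_mem_orthogonal hy hx, sub_zero]
    _ ≤ ‖w - y‖ * ‖x‖ := norm_inner_le_norm _ _

theorem Submodule.exists_mem_orthogonal_ne_zero_of_finrank_lt [FiniteDimensional 𝕜 E]
    {K T : Submodule 𝕜 E} (h : Module.finrank 𝕜 K < Module.finrank 𝕜 T) :
    ∃ x ∈ T, x ∈ Kᗮ ∧ x ≠ 0 := by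
  have hnd : ¬ Disjoint T Kᗮ := fun hd => by
    have := Submodule.finrank_add_finrank_le_of_disjoint hd
    have := K.finrank_add_finrank_orthogonal
    omega
  simpa [Submodule.disjoint_def] using hnd

end InnerProductSpace

theorem Matrix.IsHermitian.toEuclideanLin_eigenvectorBasis {𝕜 n : Type*} [RCLike 𝕜] [Fintype n]
    [DecidableEq n] {A : Matrix n n 𝕜} (hA : A.IsHermitian) (i : n) :
    toEuclideanLin A (hA.eigenvectorBasis i) = (hA.eigenvalues i : 𝕜) • hA.eigenvectorBasis i := by
  ext j
  have := congrFun (hA.mulVec_eigenvectorBasis i) j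
  rw [Pi.smul_apply, RCLike.real_smul_eq_coe_smul (K := 𝕜)] at this
  simpa only [toLpLin_apply, PiLp.smul_apply] using this

theorem Matrix.finrank_range_toEuclideanLin {𝕜 m n : Type*} [RCLike 𝕜] [Fintype m] [Fintype n]
    [DecidableEq n] (A : Matrix m n 𝕜) :
    Module.finrank 𝕜 (LinearMap.range (toEuclideanLin A)) = A.rank := by
  rw [A.rank_eq_finrank_range_toLin (PiLp.basisFun 2 𝕜 m) (PiLp.basisFun 2 𝕜 n),
    ← toLpLin_eq_toLin]

theorem Matrix.toEuclideanLin_add_vecMulVec_of_mem_orthogonal_range {n : Type*} [Fintype n]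
    [DecidableEq n] {M : Matrix n n ℝ} (hM : M.IsHermitian) (w : EuclideanSpace ℝ n)
    {x : EuclideanSpace ℝ n} (hx : x ∈ (LinearMap.range (toEuclideanLin M))ᗮ) :
    toEuclideanLin (M + vecMulVec (WithLp.equiv 2 _ w) (WithLp.equiv 2 _ w)) x =
      inner ℝ w x • w := by
  rw [(isSymmetric_toEuclideanLin_iff.2 hM).orthogonal_range] at hx
  have hrankOne := (LinearEquiv.eq_symm_apply _).1
    (InnerProductSpace.symm_toEuclideanLin_rankOne w w).symm
  simp only [star_trivial] at hrankOne
  simp [LinearMap.mem_ker.1 hx, hrankOne]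

/-- If `M` is symmetric of rank `k-1` with column span `E`, then for any `w`,
`‖w‖ · dist(w, E) ≥ σ_k (M + w wᵀ)`. -/
theorem stmt3 {d k : ℕ} (hk : 0 < k) (M : Matrix (Fin d) (Fin d) ℝ)
    (hM : M.IsHermitian) (hrank : M.rank = k - 1)
    (w : EuclideanSpace ℝ (Fin d))
    (hZ : (M + Matrix.vecMulVec (WithLp.equiv 2 _ w) (WithLp.equiv 2 _ w)).IsHermitian) :
    kthSingular _ hZ k ≤
      ‖w‖ * Metric.infDist w (↑(LinearMap.range (Matrix.toEuclideanLin M)) : Set _) := by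
  set E := LinearMap.range (toEuclideanLin M)
  set s := kthSingular _ hZ k
  rcases le_or_gt s 0 with hs | hs
  · exact hs.trans (mul_nonneg (norm_nonneg _) Metric.infDist_nonneg)
  have hkd : k ≤ d := by
    by_contra! h
    exact hs.ne' (kthSingular_eq_zero_of_lt hZ h)
  set b := hZ.eigenvectorBasis
  set I := Finset.univ.filter fun i => s ≤ |hZ.eigenvalues i|
  have hE : Module.finrank ℝ E < Module.finrank ℝ (Submodule.span ℝ (b '' I)) := by
    have hI : k ≤ I.card := le_card_filter_kthSingular_le_abs_eigenvalues hZ hk hkd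
    rw [finrank_range_toEuclideanLin, hrank, b.finrank_span_image]
    omega
  obtain ⟨x, hxT, hxE, hx0⟩ := Submodule.exists_mem_orthogonal_ne_zero_of_finrank_lt hE
  refine le_of_mul_le_mul_right ?_ (norm_pos_iff.2 hx0)
  calc s * ‖x‖ ≤ ‖toEuclideanLin _ x‖ :=
        b.mul_norm_le_norm_apply_of_mem_span _ _ hZ.toEuclideanLin_eigenvectorBasis hs.le I
          (by simp [I]) hxT
    _ = ‖inner ℝ w x‖ * ‖w‖ := by
        rw [toEuclideanLin_add_vecMulVec_of_mem_orthogonal_range hM w hxE, norm_smul]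
    _ ≤ Metric.infDist w E * ‖x‖ * ‖w‖ := by
        gcongr
        exact E.norm_inner_le_infDist_mul_norm w hxE
    _ = ‖w‖ * Metric.infDist w E * ‖x‖ := by ring
end

section
/- Let E and F be subspaces of ℝ^n with ‖P_{E^⊥} P_F‖ ≤ δ (operator norm). Then for every v ∈ ℝ^n, ‖P_F v‖² ≤ ‖P_E v‖² + 3δ‖v‖². -/
/-- The orthogonal projection onto a submodule `K`, as a map of the ambient space. -/
noncomputable def projC {n : ℕ} (K : Submodule ℝ (EuclideanSpace ℝ (Fin n))) :
    EuclideanSpace ℝ (Fin n) →L[ℝ] EuclideanSpace ℝ (Fin n) :=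
  K.subtypeL.comp (K.orthogonalProjectionOnto)

/-!
Write `w = P_F v`. Since `P_F` is a self-adjoint idempotent, `‖w‖² = ⟪w, v⟫`; splitting
`v = P_E v + P_{E^⊥} v` and moving `P_{E^⊥}` across the inner product gives
`‖w‖² ≤ ‖w‖ ‖P_E v‖ + ‖P_{E^⊥} P_F v‖ ‖v‖ ≤ ‖w‖ ‖P_E v‖ + δ ‖v‖²`,
and `‖w‖ ‖P_E v‖ ≤ (‖w‖² + ‖P_E v‖²) / 2` yields the bound even with `2δ` in place of `3δ`.
-/

namespace Submodule

open scoped RealInnerProductSpace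

variable {E : Type*} [NormedAddCommGroup E] [InnerProductSpace ℝ E]
  (U V : Submodule ℝ E) [U.HasOrthogonalProjection] [V.HasOrthogonalProjection]

theorem norm_sq_starProjection_eq_inner (v : E) :
    ‖V.starProjection v‖ ^ 2 = ⟪V.starProjection v, v⟫ := by
  simpa using (V.re_inner_starProjection_eq_normSq v).symm

theorem norm_sq_starProjection_le (v : E) :
    ‖V.starProjection v‖ ^ 2 ≤
      ‖V.starProjection v‖ * ‖U.starProjection v‖ +
        ‖Uᗮ.starProjection (V.starProjection v)‖ * ‖v‖ := by
  set w := V.starProjection v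
  calc ‖w‖ ^ 2 = ⟪w, U.starProjection v + Uᗮ.starProjection v⟫ := by
        rw [U.starProjection_add_starProjection_orthogonal, V.norm_sq_starProjection_eq_inner]
    _ = ⟪w, U.starProjection v⟫ + ⟪Uᗮ.starProjection w, v⟫ := by
        rw [inner_add_right, Uᗮ.inner_starProjection_left_eq_right]
    _ ≤ ‖w‖ * ‖U.starProjection v‖ + ‖Uᗮ.starProjection w‖ * ‖v‖ :=
        add_le_add (real_inner_le_norm _ _) (real_inner_le_norm _ _)

theorem norm_sq_starProjection_le_of_norm_comp_le {δ : ℝ}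
    (h : ‖Uᗮ.starProjection ∘L V.starProjection‖ ≤ δ) (v : E) :
    ‖V.starProjection v‖ ^ 2 ≤ ‖U.starProjection v‖ ^ 2 + 2 * δ * ‖v‖ ^ 2 := by
  have hcomp : ‖Uᗮ.starProjection (V.starProjection v)‖ * ‖v‖ ≤ δ * ‖v‖ ^ 2 := by
    calc ‖Uᗮ.starProjection (V.starProjection v)‖ * ‖v‖
        ≤ ‖Uᗮ.starProjection ∘L V.starProjection‖ * ‖v‖ * ‖v‖ := by
          gcongr
          exact (Uᗮ.starProjection ∘L V.starProjection).le_opNorm v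
      _ ≤ δ * ‖v‖ ^ 2 := by
          rw [mul_assoc, ← sq]
          gcongr
  nlinarith [U.norm_sq_starProjection_le V v,
    sq_nonneg (‖V.starProjection v‖ - ‖U.starProjection v‖)]

end Submodule

/-- If `‖P_{Eᗮ} P_F‖ ≤ δ` then `‖P_F v‖² ≤ ‖P_E v‖² + 3 δ ‖v‖²` for every `v`. -/
theorem stmt5 {n : ℕ} (E F : Submodule ℝ (EuclideanSpace ℝ (Fin n))) (δ : ℝ)
    (h : ‖(projC Eᗮ).comp (projC F)‖ ≤ δ) (v : EuclideanSpace ℝ (Fin n)) :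
    ‖projC F v‖ ^ 2 ≤ ‖projC E v‖ ^ 2 + 3 * δ * ‖v‖ ^ 2 := by
  have hδ : 0 ≤ δ := (norm_nonneg _).trans h
  calc ‖projC F v‖ ^ 2 ≤ ‖projC E v‖ ^ 2 + 2 * δ * ‖v‖ ^ 2 :=
        E.norm_sq_starProjection_le_of_norm_comp_le F h v
    _ ≤ ‖projC E v‖ ^ 2 + 3 * δ * ‖v‖ ^ 2 := by gcongr; linarith
end

section
/- Let μ_1, ..., μ_k ∈ ℝ^d be linearly independent, α_i > 0, and let v ∈ ℝ^d satisfy ⟨μ_1, v⟩ > ⟨μ_i, v⟩ for all i ≠ 1. Define Z_λ = Σ_i α_i (1 − λ⟨μ_i, v⟩) μ_i μ_i^T. If ⟨μ_1, v⟩ > 0, then λ* = 1/⟨μ_1, v⟩ is the largest λ such that Z_λ is positive semi-definite. -/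
/-!
For linearly independent `μ i`, the matrix `∑ i, c i • μ i μ iᵀ` is positive semidefinite exactly
when every coefficient `c i` is nonnegative: testing the quadratic form against a vector `w`
orthogonal to all `μ i` with `i ≠ j` but not to `μ j` isolates `c j * (μ j ⬝ᵥ w) ^ 2`. For
`Z λ` the coefficients are `α i * (1 - λ * ⟨μ i, v⟩)`, all nonnegative iff `λ * ⟨μ i, v⟩ ≤ 1`
for every `i`, and since `⟨μ 0, v⟩` is the largest and positive pairing this means
`λ ≤ 1 / ⟨μ 0, v⟩`.
-/

open Matrix

theorem dotProduct_sum_smul_vecMulVec_self_mulVec {ι n R : Type*} [Fintype ι] [Fintype n]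
    [CommRing R] (c : ι → R) (μ : ι → n → R) (x : n → R) :
    x ⬝ᵥ ((∑ i, c i • vecMulVec (μ i) (μ i)) *ᵥ x) = ∑ i, c i * (μ i ⬝ᵥ x) ^ 2 := by
  simp only [sum_mulVec, smul_mulVec, vecMulVec_mulVec, dotProduct_sum, dotProduct_smul,
    op_smul_eq_smul, smul_eq_mul]
  exact Finset.sum_congr rfl fun i _ => by rw [dotProduct_comm x]; ring

theorem LinearIndependent.exists_dotProduct_ne_zero_of_ne {ι n K : Type*} [Fintype n]
    [DecidableEq n] [Field K] {μ : ι → n → K} (hμ : LinearIndependent K μ) (j : ι) :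
    ∃ w : n → K, μ j ⬝ᵥ w ≠ 0 ∧ ∀ i, i ≠ j → μ i ⬝ᵥ w = 0 := by
  obtain ⟨f, hfj, hker⟩ := Submodule.exists_le_ker_of_notMem
    (hμ.notMem_span_image (Set.notMem_compl_iff.2 (Set.mem_singleton j)))
  refine ⟨(dotProductEquiv K n).symm f, ?_, fun i hi => ?_⟩
  all_goals rw [dotProduct_comm, ← dotProductEquiv_apply_apply, LinearEquiv.apply_symm_apply]
  · exact hfj
  · exact hker (Submodule.subset_span ⟨i, hi, rfl⟩)

theorem posSemidef_sum_smul_vecMulVec_self_iff {ι n K : Type*} [Fintype ι] [Fintype n] [Field K]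
    [LinearOrder K] [StarRing K] [TrivialStar K] [StarOrderedRing K]
    {μ : ι → n → K} (hμ : LinearIndependent K μ) (c : ι → K) :
    (∑ i, c i • vecMulVec (μ i) (μ i)).PosSemidef ↔ ∀ i, 0 ≤ c i := by
  classical
  constructor
  · intro hpsd j
    obtain ⟨w, hwj, hwi⟩ := hμ.exists_dotProduct_ne_zero_of_ne j
    have hq := hpsd.dotProduct_mulVec_nonneg w
    rw [star_trivial, dotProduct_sum_smul_vecMulVec_self_mulVec,
      Finset.sum_eq_single j (fun i _ hi => by rw [hwi i hi]; ring) (by simp)] at hq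
    exact nonneg_of_mul_nonneg_left hq (by positivity)
  · intro hc
    refine posSemidef_sum _ fun i _ => ?_
    simpa using (posSemidef_vecMulVec_self_star (μ i)).smul (hc i)

/-- With `Z λ = ∑ i α i (1 - λ ⟨μ i, v⟩) μ i μ iᵀ`, linearly independent `μ`, positive
weights, `⟨μ 0, v⟩ > ⟨μ i, v⟩` for `i ≠ 0` and `⟨μ 0, v⟩ > 0`, the value
`λ* = 1/⟨μ 0, v⟩` is the largest `λ` for which `Z λ` is positive semi-definite. -/
theorem stmt6 {d k : ℕ} (μ : Fin (k + 1) → Fin d → ℝ) (hμ : LinearIndependent ℝ μ)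
    (α : Fin (k + 1) → ℝ) (hα : ∀ i, 0 < α i) (v : Fin d → ℝ)
    (hv : ∀ i, i ≠ 0 → μ i ⬝ᵥ v < μ 0 ⬝ᵥ v) (h0 : 0 < μ 0 ⬝ᵥ v) :
    IsGreatest {lam : ℝ |
        (∑ i, (α i * (1 - lam * (μ i ⬝ᵥ v))) • Matrix.vecMulVec (μ i) (μ i)).PosSemidef}
      (μ 0 ⬝ᵥ v)⁻¹ := by
  simp only [upperBounds, IsGreatest, Set.mem_ofPred_eq, posSemidef_sum_smul_vecMulVec_self_iff hμ]
  constructor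
  · intro i
    have hle : μ i ⬝ᵥ v ≤ μ 0 ⬝ᵥ v := by
      rcases eq_or_ne i 0 with rfl | hi
      exacts [le_rfl, (hv i hi).le]
    exact mul_nonneg (hα i).le (sub_nonneg.2 (inv_mul_le_one_of_le₀ hle h0.le))
  · intro lam hlam
    have hlam_le : lam * (μ 0 ⬝ᵥ v) ≤ 1 := sub_nonneg.1 (nonneg_of_mul_nonneg_right (hlam 0) (hα 0))
    simpa using (le_mul_inv_iff₀ h0).2 hlam_le
end

section
/- Let A and Â be symmetric positive semi-definite d×d matrices with ‖A − Â‖ ≤ ε < σ_k(A)/4, where A has rank exactly k (so σ_{k+1}(A) = 0). Let V, V̂ ∈ ℝ^{d×k} have orthonormal columns spanning the top-k eigenspaces of A and Â respectively. Then for every u ∈ ℝ^k, √(1 − 16ε²/σ_k(A)²)·‖u‖ ≤ ‖V̂^T V u‖ ≤ ‖u‖. -/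
/-!
With `Q = 1 - V̂ V̂ᵀ`, Pythagoras gives `‖V̂ᵀ V u‖² = ‖u‖² - ‖Q V u‖²`, so the claim is the
Davis–Kahan type bound `‖Q V‖ ≤ 4ε/σ_k`. Since `A V = V D`, the matrix `T = Q V` solves
`T D = (Q Â Q) T + Q (A - Â) V`, and the compression `Q Â Q` has norm at most `ε`: a vector
`z ⊥ range V̂` with Rayleigh quotient above `ε` would span, together with the top eigenvectors, a
`(k+1)`-dimensional space on which the quadratic form of `Â` exceeds `ε`, but this space meets
`ker A`, where the forms of `Â` and `Â - A` agree. As `D ≥ σ_k`, this gives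
`σ_k ‖T‖ ≤ ε ‖T‖ + ε`, i.e. `‖T‖ ≤ ε/(σ_k - ε) ≤ 4ε/σ_k`.
-/

open Matrix

noncomputable def spec {d : ℕ} (A : Matrix (Fin d) (Fin d) ℝ) : ℝ :=
  ‖Matrix.toEuclideanCLM (𝕜 := ℝ) A‖

open scoped Matrix.Norms.L2Operator

namespace Matrix

variable {m n : Type*} [Fintype m]

lemma exists_ne_zero_mulVec_eq_zero_of_rank_lt {K E : Type*} [Field K] [AddCommGroup E]
    [Module K E] [FiniteDimensional K E] (A : Matrix n m K) (L : E →ₗ[K] m → K)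
    (h : A.rank < Module.finrank K E) : ∃ x ≠ 0, A *ᵥ L x = 0 := by
  have hrange : Module.finrank K (LinearMap.range (A.mulVecLin ∘ₗ L)) ≤ A.rank :=
    Submodule.finrank_mono (LinearMap.range_comp_le_range _ _)
  have := LinearMap.finrank_range_add_finrank_ker (A.mulVecLin ∘ₗ L)
  obtain ⟨⟨x, hx⟩, hx0⟩ := Module.finrank_pos_iff_exists_ne_zero.mp (by omega :
    0 < Module.finrank K (LinearMap.ker (A.mulVecLin ∘ₗ L)))
  exact ⟨x, fun h => hx0 (Subtype.ext h), hx⟩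

lemma isSymm_one_sub_mul_transpose [DecidableEq n] (W : Matrix n m ℝ) :
    (1 - W * Wᵀ).IsSymm := by
  rw [IsSymm, transpose_sub, transpose_one, transpose_mul, transpose_transpose]

variable [Fintype n]

lemma dotProduct_self_nonneg (x : n → ℝ) : 0 ≤ x ⬝ᵥ x :=
  Finset.sum_nonneg fun i _ => mul_self_nonneg (x i)

lemma norm_toLp_sq (x : n → ℝ) : ‖WithLp.toLp 2 x‖ ^ 2 = x ⬝ᵥ x := by
  rw [← real_inner_self_eq_norm_sq, EuclideanSpace.inner_toLp_toLp]
  simp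

lemma mulVec_dotProduct_mulVec_of_transpose_mul_self_eq_one [DecidableEq n] {V : Matrix m n ℝ}
    (hV : Vᵀ * V = 1) (x y : n → ℝ) : (V *ᵥ x) ⬝ᵥ (V *ᵥ y) = x ⬝ᵥ y := by
  rw [dotProduct_comm, ← dotProduct_transpose_mulVec, mulVec_mulVec, hV, one_mulVec]

lemma dotProduct_mulVec_self_le [DecidableEq n] (M : Matrix m n ℝ) (x : n → ℝ) :
    (M *ᵥ x) ⬝ᵥ (M *ᵥ x) ≤ ‖M‖ ^ 2 * (x ⬝ᵥ x) := by
  rw [← norm_toLp_sq, ← norm_toLp_sq, ← mul_pow]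
  exact pow_le_pow_left₀ (norm_nonneg _) (l2_opNorm_mulVec M (WithLp.toLp 2 x)) 2

lemma abs_dotProduct_mulVec_le [DecidableEq n] (M : Matrix n n ℝ) (x : n → ℝ) :
    |x ⬝ᵥ M *ᵥ x| ≤ ‖M‖ * (x ⬝ᵥ x) := by
  set y := WithLp.toLp 2 x
  rw [← inner_toEuclideanCLM M y y, ← norm_toLp_sq, ← l2_opNorm_toEuclideanCLM]
  calc _ ≤ ‖y‖ * ‖toEuclideanCLM (𝕜 := ℝ) M y‖ := abs_real_inner_le_norm _ _
    _ ≤ ‖y‖ * (‖toEuclideanCLM (𝕜 := ℝ) M‖ * ‖y‖) := by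
      gcongr; exact ContinuousLinearMap.le_opNorm _ _
    _ = ‖toEuclideanCLM (𝕜 := ℝ) M‖ * ‖y‖ ^ 2 := by ring

lemma l2_opNorm_le_of_abs_dotProduct_mulVec_le [DecidableEq n] {M : Matrix n n ℝ}
    (hM : M.IsHermitian) {ε : ℝ} (hε : 0 ≤ ε) (h : ∀ x, |x ⬝ᵥ M *ᵥ x| ≤ ε * (x ⬝ᵥ x)) :
    ‖M‖ ≤ ε := by
  rw [← l2_opNorm_toEuclideanCLM, ContinuousLinearMap.norm_eq_iSup_rayleighQuotient
    (T := toEuclideanCLM (𝕜 := ℝ) M) (isSymmetric_toEuclideanLin_iff.mpr hM)]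
  refine ciSup_le fun y => ?_
  rw [ContinuousLinearMap.rayleighQuotient, abs_div, abs_of_nonneg (sq_nonneg ‖y‖)]
  rcases eq_or_ne y 0 with rfl | hy
  · simpa using hε
  rw [div_le_iff₀ (by positivity), ContinuousLinearMap.reApplyInnerSelf_apply, RCLike.re_to_real,
    real_inner_comm, inner_toEuclideanCLM]
  simpa only [← norm_toLp_sq, WithLp.toLp_ofLp] using h y.ofLp

lemma l2_opNorm_one_le [DecidableEq n] : ‖(1 : Matrix n n ℝ)‖ ≤ 1 := by
  rw [← diagonal_one, l2_opNorm_diagonal]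
  exact (pi_norm_le_iff_of_nonneg zero_le_one).2 fun _ => by simp

lemma l2_opNorm_le_one_of_transpose_mul_self_eq_one [DecidableEq n] {V : Matrix m n ℝ}
    (hV : Vᵀ * V = 1) : ‖V‖ ≤ 1 := by
  have h := l2_opNorm_conjTranspose_mul_self V
  rw [conjTranspose_eq_transpose_of_trivial, hV] at h
  nlinarith [norm_nonneg V, l2_opNorm_one_le (n := n)]

lemma l2_opNorm_le_one_of_isIdempotentElem [DecidableEq n] {Q : Matrix n n ℝ}
    (hQ : Q.IsSymm) (hQQ : IsIdempotentElem Q) : ‖Q‖ ≤ 1 := by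
  have h := l2_opNorm_conjTranspose_mul_self Q
  rw [conjTranspose_eq_transpose_of_trivial, hQ.eq, hQQ.eq] at h
  nlinarith [norm_nonneg Q]

lemma l2_opNorm_le_of_mul_diagonal_eq [DecidableEq m] [DecidableEq n] {T F : Matrix m n ℝ}
    {M : Matrix m m ℝ} {δ : n → ℝ} {σ β φ : ℝ} (hT : T * diagonal δ = M * T + F)
    (hM : ‖M‖ ≤ β) (hF : ‖F‖ ≤ φ) (hδ : ∀ i, σ ≤ δ i) (hβσ : β < σ) :
    ‖T‖ ≤ φ / (σ - β) := by
  have hσ : 0 < σ := ((norm_nonneg M).trans hM).trans_lt hβσ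
  have hδ₀ : ∀ i, 0 < δ i := fun i => hσ.trans_le (hδ i)
  have hT' : T = (M * T + F) * diagonal δ⁻¹ := by
    have h1 : (fun i => δ i * δ⁻¹ i) = fun _ => 1 := funext fun i => mul_inv_cancel₀ (hδ₀ i).ne'
    rw [← hT, Matrix.mul_assoc, diagonal_mul_diagonal, h1, diagonal_one, Matrix.mul_one]
  have hδinv : ‖(diagonal δ⁻¹ : Matrix n n ℝ)‖ ≤ σ⁻¹ := by
    rw [l2_opNorm_diagonal]
    refine (pi_norm_le_iff_of_nonneg (inv_nonneg.2 hσ.le)).2 fun i => ?_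
    rw [Pi.inv_apply, norm_inv, Real.norm_of_nonneg (hδ₀ i).le]
    exact inv_anti₀ hσ (hδ i)
  have key : ‖T‖ ≤ (β * ‖T‖ + φ) * σ⁻¹ :=
    calc ‖T‖ ≤ ‖M * T + F‖ * ‖(diagonal δ⁻¹ : Matrix n n ℝ)‖ := by
          conv_lhs => rw [hT']
          exact l2_opNorm_mul _ _
      _ ≤ (‖M‖ * ‖T‖ + ‖F‖) * σ⁻¹ := by
        refine mul_le_mul ((norm_add_le _ _).trans ?_) hδinv (norm_nonneg _) (by positivity)
        exact add_le_add_left (l2_opNorm_mul _ _) _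
      _ ≤ (β * ‖T‖ + φ) * σ⁻¹ := mul_le_mul_of_nonneg_right
        (add_le_add (mul_le_mul_of_nonneg_right hM (norm_nonneg T)) hF) (inv_nonneg.2 hσ.le)
  rw [le_div_iff₀ (sub_pos.2 hβσ)]
  rw [← div_eq_mul_inv, le_div_iff₀ hσ] at key
  linarith

lemma transpose_mul_eq_diagonal_mul_transpose [DecidableEq m] {B : Matrix n n ℝ} (hB : B.IsSymm)
    {W : Matrix n m ℝ} {μ : m → ℝ} (heig : B * W = W * diagonal μ) :
    Wᵀ * B = diagonal μ * Wᵀ := by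
  rw [← hB.eq, ← transpose_mul, heig, transpose_mul, diagonal_transpose]

lemma mulVec_add_smul_dotProduct_mulVec [DecidableEq m] {B : Matrix n n ℝ} (hB : B.IsSymm)
    {W : Matrix n m ℝ} {μ : m → ℝ} (hW : Wᵀ * W = 1) (heig : B * W = W * diagonal μ)
    {z : n → ℝ} (hz : Wᵀ *ᵥ z = 0) (c : m → ℝ) (t : ℝ) :
    (W *ᵥ c + t • z) ⬝ᵥ B *ᵥ (W *ᵥ c + t • z)
      = c ⬝ᵥ (diagonal μ *ᵥ c) + t ^ 2 * (z ⬝ᵥ B *ᵥ z) := by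
  have hzW : ∀ a, z ⬝ᵥ W *ᵥ a = 0 := fun a => by
    rw [← dotProduct_transpose_mulVec, hz, dotProduct_zero]
  have hBzW : ∀ a, (W *ᵥ a) ⬝ᵥ (B *ᵥ z) = 0 := fun a => by
    rw [dotProduct_comm, ← dotProduct_transpose_mulVec, mulVec_mulVec,
      transpose_mul_eq_diagonal_mul_transpose hB heig, ← mulVec_mulVec, hz, mulVec_zero,
      dotProduct_zero]
  rw [mulVec_add, mulVec_smul, mulVec_mulVec, heig, ← mulVec_mulVec]
  simp only [dotProduct_add, add_dotProduct, dotProduct_smul, smul_dotProduct, smul_eq_mul,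
    mulVec_dotProduct_mulVec_of_transpose_mul_self_eq_one hW, hzW, hBzW]
  ring

lemma dotProduct_mulVec_le_of_rank_le [DecidableEq n] [DecidableEq m] {A Ahat : Matrix n n ℝ}
    (hAhat : Ahat.IsSymm) (hrank : A.rank ≤ Fintype.card m) {Vhat : Matrix n m ℝ} {μ : m → ℝ}
    (hVhat : Vhatᵀ * Vhat = 1) (heig : Ahat * Vhat = Vhat * diagonal μ) {z : n → ℝ}
    (hz : Vhatᵀ *ᵥ z = 0) (hμ : ∀ j, z ⬝ᵥ Ahat *ᵥ z ≤ μ j * (z ⬝ᵥ z)) :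
    z ⬝ᵥ Ahat *ᵥ z ≤ ‖A - Ahat‖ * (z ⬝ᵥ z) := by
  set ε := ‖A - Ahat‖
  set R := z ⬝ᵥ Ahat *ᵥ z
  set S := z ⬝ᵥ z
  by_contra! hlt
  have hS : 0 < S := by
    refine (dotProduct_self_nonneg z).lt_of_ne' fun h0 => ?_
    obtain rfl := dotProduct_self_eq_zero.mp h0
    simp [R, S] at hlt
  let L : (m → ℝ) × ℝ →ₗ[ℝ] n → ℝ := Vhat.mulVecLin.coprod (LinearMap.toSpanSingleton ℝ _ z)
  obtain ⟨⟨c, t⟩, hct, hker⟩ :=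
    exists_ne_zero_mulVec_eq_zero_of_rank_lt A L (by simpa using Nat.lt_succ_of_le hrank)
  set v := Vhat *ᵥ c + t • z
  change A *ᵥ v = 0 at hker
  have hvv : v ⬝ᵥ v = c ⬝ᵥ c + t ^ 2 * S := by
    have h := mulVec_add_smul_dotProduct_mulVec isSymm_one (μ := fun _ => 1) hVhat
      (by rw [Matrix.one_mul, diagonal_one, Matrix.mul_one]) hz c t
    simpa only [one_mulVec, diagonal_one] using h
  have hvAv : v ⬝ᵥ Ahat *ᵥ v = c ⬝ᵥ (diagonal μ *ᵥ c) + t ^ 2 * R :=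
    mulVec_add_smul_dotProduct_mulVec hAhat hVhat heig hz c t
  have hlow : R * (v ⬝ᵥ v) ≤ S * (v ⬝ᵥ Ahat *ᵥ v) := by
    have h : R * (c ⬝ᵥ c) ≤ S * (c ⬝ᵥ (diagonal μ *ᵥ c)) := by
      simp only [dotProduct, mulVec_diagonal, Finset.mul_sum]
      exact Finset.sum_le_sum fun j _ => by nlinarith [hμ j, mul_self_nonneg (c j)]
    rw [hvv, hvAv]
    nlinarith
  have hup : v ⬝ᵥ Ahat *ᵥ v ≤ ε * (v ⬝ᵥ v) := by
    have h := abs_dotProduct_mulVec_le (A - Ahat) v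
    rw [sub_mulVec, hker, zero_sub, dotProduct_neg, abs_neg] at h
    exact (le_abs_self _).trans h
  have hv : v ⬝ᵥ v ≤ 0 := by nlinarith [dotProduct_self_nonneg v]
  rw [hvv] at hv
  have hc : c ⬝ᵥ c = 0 := by nlinarith [dotProduct_self_nonneg c, sq_nonneg t]
  have ht : t ^ 2 = 0 := by nlinarith [dotProduct_self_nonneg c, sq_nonneg t]
  exact hct (Prod.ext (dotProduct_self_eq_zero.mp hc) (pow_eq_zero_iff two_ne_zero |>.mp ht))

section Projection

variable {W : Matrix n m ℝ}

lemma isIdempotentElem_one_sub_mul_transpose [DecidableEq m] [DecidableEq n] (hW : Wᵀ * W = 1) :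
    IsIdempotentElem (1 - W * Wᵀ) := by
  refine IsIdempotentElem.one_sub ?_
  rw [IsIdempotentElem, Matrix.mul_assoc, ← Matrix.mul_assoc Wᵀ, hW, Matrix.one_mul]

lemma commute_mul_transpose [DecidableEq m] {B : Matrix n n ℝ} (hB : B.IsSymm) {μ : m → ℝ}
    (heig : B * W = W * diagonal μ) : Commute B (W * Wᵀ) := by
  rw [Commute, SemiconjBy, ← Matrix.mul_assoc, heig, Matrix.mul_assoc W Wᵀ,
    transpose_mul_eq_diagonal_mul_transpose hB heig, Matrix.mul_assoc]

lemma transpose_mulVec_one_sub_mul_transpose [DecidableEq m] [DecidableEq n] (hW : Wᵀ * W = 1)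
    (x : n → ℝ) : Wᵀ *ᵥ ((1 - W * Wᵀ) *ᵥ x) = 0 := by
  rw [mulVec_mulVec, Matrix.mul_sub, Matrix.mul_one, ← Matrix.mul_assoc, hW, Matrix.one_mul,
    sub_self, zero_mulVec]

lemma one_sub_mul_transpose_pythagoras [DecidableEq m] [DecidableEq n] (hW : Wᵀ * W = 1)
    (x : n → ℝ) :
    ((1 - W * Wᵀ) *ᵥ x) ⬝ᵥ ((1 - W * Wᵀ) *ᵥ x) + (Wᵀ *ᵥ x) ⬝ᵥ (Wᵀ *ᵥ x) = x ⬝ᵥ x := by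
  rw [← dotProduct_transpose_mulVec, (isSymm_one_sub_mul_transpose W).eq, mulVec_mulVec,
    (isIdempotentElem_one_sub_mul_transpose hW).eq, sub_mulVec, one_mulVec, dotProduct_sub,
    ← mulVec_mulVec, dotProduct_mulVec, ← mulVec_transpose]
  ring

end Projection

lemma l2_opNorm_compression_le [DecidableEq n] [DecidableEq m] {A Ahat : Matrix n n ℝ}
    (hAhat : Ahat.PosSemidef) (hrank : A.rank ≤ Fintype.card m) {Vhat : Matrix n m ℝ}
    {μ : m → ℝ} (hVhat : Vhatᵀ * Vhat = 1) (heig : Ahat * Vhat = Vhat * diagonal μ)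
    (htop : ∀ z, Vhatᵀ *ᵥ z = 0 → ∀ j, z ⬝ᵥ Ahat *ᵥ z ≤ μ j * (z ⬝ᵥ z)) :
    ‖(1 - Vhat * Vhatᵀ) * Ahat * (1 - Vhat * Vhatᵀ)‖ ≤ ‖A - Ahat‖ := by
  set Q := 1 - Vhat * Vhatᵀ
  have hQ : Qᴴ = Q := by
    rw [conjTranspose_eq_transpose_of_trivial, (isSymm_one_sub_mul_transpose Vhat).eq]
  have hM := hAhat.conjTranspose_mul_mul_same Q
  rw [hQ] at hM
  refine l2_opNorm_le_of_abs_dotProduct_mulVec_le hM.1 (norm_nonneg _) fun x => ?_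
  set y := Q *ᵥ x
  have hxy : x ⬝ᵥ (Q * Ahat * Q) *ᵥ x = y ⬝ᵥ Ahat *ᵥ y := by
    rw [← mulVec_mulVec, ← mulVec_mulVec, ← dotProduct_transpose_mulVec,
      ← conjTranspose_eq_transpose_of_trivial, hQ, dotProduct_comm]
  have hy : Vhatᵀ *ᵥ y = 0 := transpose_mulVec_one_sub_mul_transpose hVhat x
  have hnonneg : 0 ≤ y ⬝ᵥ Ahat *ᵥ y := by simpa using hAhat.dotProduct_mulVec_nonneg y
  have hyx : y ⬝ᵥ y ≤ x ⬝ᵥ x := by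
    have := one_sub_mul_transpose_pythagoras hVhat x
    linarith [dotProduct_self_nonneg (Vhatᵀ *ᵥ x)]
  rw [hxy, abs_of_nonneg hnonneg]
  calc _ ≤ ‖A - Ahat‖ * (y ⬝ᵥ y) :=
        dotProduct_mulVec_le_of_rank_le (isHermitian_iff_isSymm.mp hAhat.1) hrank hVhat heig hy
          (htop y hy)
    _ ≤ ‖A - Ahat‖ * (x ⬝ᵥ x) := mul_le_mul_of_nonneg_left hyx (norm_nonneg _)

lemma mul_diagonal_eq_compression_mul_add [DecidableEq m] [DecidableEq n] {A B Q : Matrix n n ℝ}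
    {V : Matrix n m ℝ} {δ : m → ℝ} (hQ : IsIdempotentElem Q) (hBQ : Commute B Q)
    (hAV : A * V = V * diagonal δ) :
    Q * V * diagonal δ = Q * B * Q * (Q * V) + Q * (A - B) * V := by
  have hQBQ : Q * B * Q * Q = Q * B := by
    rw [Matrix.mul_assoc (Q * B), hQ.eq, Matrix.mul_assoc, hBQ.eq, ← Matrix.mul_assoc, hQ.eq]
  calc Q * V * diagonal δ = Q * (A * V) := by rw [hAV, Matrix.mul_assoc]
    _ = Q * B * V + Q * (A - B) * V := by
      rw [Matrix.mul_sub, Matrix.sub_mul, ← Matrix.mul_assoc]; abel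
    _ = _ := by rw [← Matrix.mul_assoc (Q * B * Q), hQBQ]

lemma l2_opNorm_one_sub_mul_transpose_mul_le [DecidableEq n] [DecidableEq m]
    {A Ahat : Matrix n n ℝ} (hAhat : Ahat.PosSemidef) (hrank : A.rank ≤ Fintype.card m)
    {V Vhat : Matrix n m ℝ} {δ μ : m → ℝ} {σ : ℝ} (hV : Vᵀ * V = 1)
    (hAV : A * V = V * diagonal δ) (hδ : ∀ i, σ ≤ δ i) (hVhat : Vhatᵀ * Vhat = 1)
    (heig : Ahat * Vhat = Vhat * diagonal μ)
    (htop : ∀ z, Vhatᵀ *ᵥ z = 0 → ∀ j, z ⬝ᵥ Ahat *ᵥ z ≤ μ j * (z ⬝ᵥ z))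
    (hgap : ‖A - Ahat‖ < σ) :
    ‖(1 - Vhat * Vhatᵀ) * V‖ ≤ ‖A - Ahat‖ / (σ - ‖A - Ahat‖) := by
  set Q := 1 - Vhat * Vhatᵀ
  have hQ : IsIdempotentElem Q := isIdempotentElem_one_sub_mul_transpose hVhat
  have hsylv : Q * V * diagonal δ = Q * Ahat * Q * (Q * V) + Q * (A - Ahat) * V :=
    mul_diagonal_eq_compression_mul_add hQ ((Commute.one_right Ahat).sub_right
      (commute_mul_transpose (isHermitian_iff_isSymm.mp hAhat.1) heig)) hAV
  have hF : ‖Q * (A - Ahat) * V‖ ≤ ‖A - Ahat‖ :=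
    calc ‖Q * (A - Ahat) * V‖ ≤ ‖Q‖ * ‖A - Ahat‖ * ‖V‖ :=
          (l2_opNorm_mul _ _).trans (mul_le_mul_of_nonneg_right (l2_opNorm_mul _ _) (norm_nonneg _))
      _ ≤ 1 * ‖A - Ahat‖ * 1 := by
        gcongr
        · exact l2_opNorm_le_one_of_isIdempotentElem (isSymm_one_sub_mul_transpose Vhat) hQ
        · exact l2_opNorm_le_one_of_transpose_mul_self_eq_one hV
      _ = ‖A - Ahat‖ := by ring
  exact l2_opNorm_le_of_mul_diagonal_eq hsylv
    (l2_opNorm_compression_le hAhat hrank hVhat heig htop) hF hδ hgap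

end Matrix

theorem stmt9_general {d k : ℕ} (ε σk : ℝ)
    (A Ahat : Matrix (Fin d) (Fin d) ℝ) (hAhat : Ahat.PosSemidef)
    (hrank : A.rank = k)
    (V : Matrix (Fin d) (Fin k) ℝ) (dvec : Fin k → ℝ)
    (hV : Vᵀ * V = 1) (hAdec : A = V * Matrix.diagonal dvec * Vᵀ)
    (hσk : IsLeast (Set.range dvec) σk)
    (Vhat : Matrix (Fin d) (Fin k) ℝ) (dhat : Fin k → ℝ)
    (hVhat : Vhatᵀ * Vhat = 1) (heig : Ahat * Vhat = Vhat * Matrix.diagonal dhat)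
    (htop : ∀ x : Fin d → ℝ, Vhatᵀ.mulVec x = 0 → ∀ j, x ⬝ᵥ Ahat.mulVec x ≤ dhat j * (x ⬝ᵥ x))
    (hclose : spec (A - Ahat) ≤ ε) (hεσ : ε < σk / 4) :
    ∀ u : Fin k → ℝ,
      Real.sqrt (1 - 16 * ε ^ 2 / σk ^ 2) * Real.sqrt (u ⬝ᵥ u)
          ≤ Real.sqrt ((Vhatᵀ * V).mulVec u ⬝ᵥ (Vhatᵀ * V).mulVec u) ∧
      Real.sqrt ((Vhatᵀ * V).mulVec u ⬝ᵥ (Vhatᵀ * V).mulVec u) ≤ Real.sqrt (u ⬝ᵥ u) := by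
  intro u
  rw [spec, l2_opNorm_toEuclideanCLM] at hclose
  have hσ : 0 < σk := by linarith [norm_nonneg (A - Ahat)]
  have hAV : A * V = V * diagonal dvec := by rw [hAdec, Matrix.mul_assoc _ Vᵀ, hV, Matrix.mul_one]
  set T := (1 - Vhat * Vhatᵀ) * V
  have hT : ‖T‖ ≤ 4 * ε / σk := by
    refine (l2_opNorm_one_sub_mul_transpose_mul_le hAhat (by simp [hrank]) hV hAV
      (fun i => hσk.2 ⟨i, rfl⟩) hVhat heig htop (by linarith)).trans ?_
    rw [div_le_div_iff₀ (by linarith) hσ]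
    nlinarith [norm_nonneg (A - Ahat)]
  have hpyth : (T *ᵥ u) ⬝ᵥ (T *ᵥ u) + ((Vhatᵀ * V) *ᵥ u) ⬝ᵥ ((Vhatᵀ * V) *ᵥ u) = u ⬝ᵥ u := by
    rw [← mulVec_mulVec, ← mulVec_mulVec, one_sub_mul_transpose_pythagoras hVhat,
      mulVec_dotProduct_mulVec_of_transpose_mul_self_eq_one hV]
  have hTu : (T *ᵥ u) ⬝ᵥ (T *ᵥ u) ≤ 16 * ε ^ 2 / σk ^ 2 * (u ⬝ᵥ u) := by
    refine (dotProduct_mulVec_self_le T u).trans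
      (mul_le_mul_of_nonneg_right ?_ (dotProduct_self_nonneg u))
    calc ‖T‖ ^ 2 ≤ (4 * ε / σk) ^ 2 := pow_le_pow_left₀ (norm_nonneg _) hT 2
      _ = 16 * ε ^ 2 / σk ^ 2 := by ring
  constructor
  · rw [← Real.sqrt_mul' _ (dotProduct_self_nonneg u)]
    exact Real.sqrt_le_sqrt (by linarith)
  · exact Real.sqrt_le_sqrt (by linarith [dotProduct_self_nonneg (T *ᵥ u)])

/-- If `A` is PSD of rank `k` with rank-`k` eigendecomposition `V D Vᵀ` and smallest
nonzero eigenvalue `σk`, `Â` is PSD with `‖A - Â‖ ≤ ε < σk/4`, and `V̂` has orthonormal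
columns spanning the top-`k` eigenspace of `Â`, then for every `u ∈ ℝ^k`,
`√(1 - 16 ε²/σk²) ‖u‖ ≤ ‖V̂ᵀ V u‖ ≤ ‖u‖` (Euclidean norms). -/
theorem stmt9 {d k : ℕ} (ε σk : ℝ) (hε : 0 ≤ ε)
    (A Ahat : Matrix (Fin d) (Fin d) ℝ) (hA : A.PosSemidef) (hAhat : Ahat.PosSemidef)
    (hrank : A.rank = k)
    (V : Matrix (Fin d) (Fin k) ℝ) (dvec : Fin k → ℝ)
    (hV : Vᵀ * V = 1) (hAdec : A = V * Matrix.diagonal dvec * Vᵀ)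
    (hσk : IsLeast (Set.range dvec) σk)
    (Vhat : Matrix (Fin d) (Fin k) ℝ) (dhat : Fin k → ℝ)
    (hVhat : Vhatᵀ * Vhat = 1) (heig : Ahat * Vhat = Vhat * Matrix.diagonal dhat)
    (htop : ∀ x : Fin d → ℝ, Vhatᵀ.mulVec x = 0 → ∀ j, x ⬝ᵥ Ahat.mulVec x ≤ dhat j * (x ⬝ᵥ x))
    (hclose : spec (A - Ahat) ≤ ε) (hεσ : ε < σk / 4) :
    ∀ u : Fin k → ℝ,
      Real.sqrt (1 - 16 * ε ^ 2 / σk ^ 2) * Real.sqrt (u ⬝ᵥ u)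
          ≤ Real.sqrt ((Vhatᵀ * V).mulVec u ⬝ᵥ (Vhatᵀ * V).mulVec u) ∧
      Real.sqrt ((Vhatᵀ * V).mulVec u ⬝ᵥ (Vhatᵀ * V).mulVec u) ≤ Real.sqrt (u ⬝ᵥ u) :=
  stmt9_general ε σk A Ahat hAhat hrank V dvec hV hAdec hσk Vhat dhat hVhat heig htop hclose hεσ
end
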